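/- For a symplectic matrix P = [[A,B],[C,D]] ∈ Sp(2k) and 0 < ε sufficiently small, the number of negative eigenvalues (counted with multiplicity) of the symmetric matrix M_ε(P) is at least dim ker B; consequently (1/2)·sgn M_ε(P) ≤ k − dim ker B, where sgn denotes the signature. -/

import Mathlib

open Matrix BigOperators

noncomputable section

/-- The standard symplectic matrix `J = [[0, -I],[I, 0]]`. -/
def Jmat (ι : Type*) [Fintype ι] [DecidableEq ι] : Matrix (ι ⊕ ι) (ι ⊕ ι) ℝ :=
  Matrix.fromBlocks 0 (-1) 1 0

/-- `M` is symplectic iff `Mᵀ J M = J`. -/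
def IsSymplectic {ι : Type*} [Fintype ι] [DecidableEq ι]
    (M : Matrix (ι ⊕ ι) (ι ⊕ ι) ℝ) : Prop :=
  Mᵀ * Jmat ι * M = Jmat ι

/-- The matrix `M_ε(P)`. -/
def Mmat {ι : Type*} [Fintype ι] [DecidableEq ι] (ε : ℝ)
    (P : Matrix (ι ⊕ ι) (ι ⊕ ι) ℝ) : Matrix (ι ⊕ ι) (ι ⊕ ι) ℝ :=
  Pᵀ * Matrix.fromBlocks (Real.sin (2*ε) • 1) (-(Real.cos (2*ε)) • 1)
      (-(Real.cos (2*ε)) • 1) (-(Real.sin (2*ε)) • 1) * P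
    + Matrix.fromBlocks (Real.sin (2*ε) • 1) (Real.cos (2*ε) • 1)
      (Real.cos (2*ε) • 1) (-(Real.sin (2*ε)) • 1)

/-- `N = diag(-I, I)`. -/
def Nmat (ι : Type*) [Fintype ι] [DecidableEq ι] : Matrix (ι ⊕ ι) (ι ⊕ ι) ℝ :=
  Matrix.fromBlocks (-1) 0 0 1

/-- `m⁺(F)`: dimension of a maximal subspace on which the quadratic form of `F`
is positive definite. -/
def posDim {ι : Type*} [Fintype ι] (F : Matrix ι ι ℝ) : ℕ :=
  sSup {d : ℕ | ∃ W : Submodule ℝ (ι → ℝ), Module.finrank ℝ W = d ∧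
    ∀ v ∈ W, v ≠ 0 → 0 < F.mulVec v ⬝ᵥ v}

/-- `m⁻(F)`: dimension of a maximal subspace on which the quadratic form of `F`
is negative definite. -/
def negDim {ι : Type*} [Fintype ι] (F : Matrix ι ι ℝ) : ℕ :=
  sSup {d : ℕ | ∃ W : Submodule ℝ (ι → ℝ), Module.finrank ℝ W = d ∧
    ∀ v ∈ W, v ≠ 0 → F.mulVec v ⬝ᵥ v < 0}

/-- The signature `sgn F = m⁺(F) - m⁻(F)`. -/
def signat {ι : Type*} [Fintype ι] (F : Matrix ι ι ℝ) : ℤ :=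
  (posDim F : ℤ) - (negDim F : ℤ)

/-- The `⋄`-product (symplectic direct sum) of two matrices. -/
def diamond {ι₁ ι₂ : Type*}
    (M₁ : Matrix (ι₁ ⊕ ι₁) (ι₁ ⊕ ι₁) ℝ) (M₂ : Matrix (ι₂ ⊕ ι₂) (ι₂ ⊕ ι₂) ℝ) :
    Matrix ((ι₁ ⊕ ι₂) ⊕ (ι₁ ⊕ ι₂)) ((ι₁ ⊕ ι₂) ⊕ (ι₁ ⊕ ι₂)) ℝ :=
  Matrix.fromBlocks
    (Matrix.fromBlocks (M₁.submatrix Sum.inl Sum.inl) 0 0 (M₂.submatrix Sum.inl Sum.inl))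
    (Matrix.fromBlocks (M₁.submatrix Sum.inl Sum.inr) 0 0 (M₂.submatrix Sum.inl Sum.inr))
    (Matrix.fromBlocks (M₁.submatrix Sum.inr Sum.inl) 0 0 (M₂.submatrix Sum.inr Sum.inl))
    (Matrix.fromBlocks (M₁.submatrix Sum.inr Sum.inr) 0 0 (M₂.submatrix Sum.inr Sum.inr))

end

/-! On vectors `(0, y)` with `B y = 0` the matrix `P = [[A, B], [C, D]]` acts as `(0, D y)`, and both
constant-coefficient blocks of `M_ε(P)` restrict to `-sin(2ε)` times the identity on such vectors. So
the quadratic form of `M_ε(P)` equals `-sin(2ε)(|D y|² + |y|²)` there, which is negative definite as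
soon as `0 < ε < π/4`. This gives a negative definite subspace of dimension `dim ker B`; since a
positive and a negative definite subspace intersect trivially, `m⁺ + m⁻ ≤ 2k` bounds the signature. -/

section InertiaIndices

variable {ι : Type*}

lemma nonempty_finrank_definite (p : (ι → ℝ) → Prop) :
    {d : ℕ | ∃ W : Submodule ℝ (ι → ℝ), Module.finrank ℝ W = d ∧
      ∀ v ∈ W, v ≠ 0 → p v}.Nonempty :=
  ⟨0, ⊥, finrank_bot ℝ _, fun _ hv hv0 => absurd ((Submodule.mem_bot ℝ).mp hv) hv0⟩

variable [Fintype ι]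

lemma bddAbove_finrank_definite (p : (ι → ℝ) → Prop) :
    BddAbove {d : ℕ | ∃ W : Submodule ℝ (ι → ℝ), Module.finrank ℝ W = d ∧
      ∀ v ∈ W, v ≠ 0 → p v} :=
  ⟨Module.finrank ℝ (ι → ℝ), by rintro _ ⟨W, rfl, -⟩; exact Submodule.finrank_le W⟩

lemma finrank_le_negDim (F : Matrix ι ι ℝ) (W : Submodule ℝ (ι → ℝ))
    (hW : ∀ v ∈ W, v ≠ 0 → F *ᵥ v ⬝ᵥ v < 0) :
    Module.finrank ℝ W ≤ negDim F :=
  le_csSup (bddAbove_finrank_definite _) ⟨W, rfl, hW⟩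

lemma posDim_add_negDim_le_card (F : Matrix ι ι ℝ) :
    posDim F + negDim F ≤ Fintype.card ι := by
  obtain ⟨Wp, hWp, hpos⟩ :=
    Nat.sSup_mem (nonempty_finrank_definite _) (bddAbove_finrank_definite
      (fun v => 0 < F *ᵥ v ⬝ᵥ v))
  obtain ⟨Wn, hWn, hneg⟩ :=
    Nat.sSup_mem (nonempty_finrank_definite _) (bddAbove_finrank_definite
      (fun v => F *ᵥ v ⬝ᵥ v < 0))
  have hdisj : Disjoint Wp Wn := Submodule.disjoint_def.mpr fun v hvp hvn => by
    by_contra hv0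
    exact (hpos v hvp hv0).not_gt (hneg v hvn hv0)
  calc posDim F + negDim F = Module.finrank ℝ ↥(Wp ⊔ Wn) := by
        rw [posDim, negDim, ← hWp, ← hWn, ← Submodule.finrank_sup_add_finrank_inf_eq,
          hdisj.eq_bot, finrank_bot, add_zero]
    _ ≤ Module.finrank ℝ (ι → ℝ) := Submodule.finrank_le _
    _ = Fintype.card ι := Module.finrank_fintype_fun_eq_card ℝ

lemma signat_le_of_le_negDim (F : Matrix ι ι ℝ) {d : ℕ} (hd : d ≤ negDim F) :
    signat F ≤ Fintype.card ι - 2 * d := by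
  have := posDim_add_negDim_le_card F
  rw [signat]
  omega

end InertiaIndices

section QuadraticForm

variable {ι : Type*} [Fintype ι]

lemma transpose_mul_mul_mulVec_dotProduct (P S : Matrix ι ι ℝ) (v : ι → ℝ) :
    (Pᵀ * S * P) *ᵥ v ⬝ᵥ v = S *ᵥ (P *ᵥ v) ⬝ᵥ (P *ᵥ v) := by
  rw [← mulVec_mulVec, ← mulVec_mulVec, dotProduct_comm, dotProduct_mulVec, vecMul_transpose,
    dotProduct_comm]

lemma fromBlocks_mulVec_sumElim_zero (A B C D : Matrix ι ι ℝ) (y : ι → ℝ) :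
    fromBlocks A B C D *ᵥ Sum.elim 0 y = Sum.elim (B *ᵥ y) (D *ᵥ y) := by
  simp [fromBlocks_mulVec]

variable [DecidableEq ι]

lemma fromBlocks_smul_one_mulVec_sumElim_zero_dotProduct (a b c d : ℝ) (y : ι → ℝ) :
    (fromBlocks (a • 1) (b • 1) (c • 1) (d • 1) : Matrix (ι ⊕ ι) (ι ⊕ ι) ℝ) *ᵥ Sum.elim 0 y
      ⬝ᵥ Sum.elim 0 y = d * (y ⬝ᵥ y) := by
  simp [fromBlocks_mulVec_sumElim_zero, sumElim_dotProduct_sumElim, smul_mulVec]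

lemma Mmat_mulVec_sumElim_zero_dotProduct {A B C D : Matrix ι ι ℝ} {y : ι → ℝ}
    (hy : B *ᵥ y = 0) (ε : ℝ) :
    Mmat ε (fromBlocks A B C D) *ᵥ Sum.elim 0 y ⬝ᵥ Sum.elim 0 y
      = -Real.sin (2 * ε) * ((D *ᵥ y) ⬝ᵥ (D *ᵥ y) + y ⬝ᵥ y) := by
  rw [Mmat, add_mulVec, add_dotProduct, transpose_mul_mul_mulVec_dotProduct,
    fromBlocks_mulVec_sumElim_zero, hy, fromBlocks_smul_one_mulVec_sumElim_zero_dotProduct,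
    fromBlocks_smul_one_mulVec_sumElim_zero_dotProduct]
  ring

lemma finrank_ker_le_negDim_Mmat (A B C D : Matrix ι ι ℝ) {ε : ℝ} (hε : 0 < Real.sin (2 * ε)) :
    Module.finrank ℝ (LinearMap.ker B.mulVecLin) ≤ negDim (Mmat ε (fromBlocks A B C D)) := by
  let inr : (ι → ℝ) →ₗ[ℝ] (ι ⊕ ι → ℝ) :=
    (LinearEquiv.sumArrowLequivProdArrow ι ι ℝ ℝ).symm.toLinearMap ∘ₗ LinearMap.inr ℝ _ _
  have hinr : Function.Injective inr := fun x y hxy => funext fun i => congrFun hxy (Sum.inr i)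
  rw [(Submodule.equivMapOfInjective inr hinr _).finrank_eq]
  refine finrank_le_negDim _ _ ?_
  rintro _ ⟨y, hy, rfl⟩ hv0
  have hy0 : y ≠ 0 := by rintro rfl; exact hv0 (map_zero inr)
  change Mmat ε _ *ᵥ Sum.elim 0 y ⬝ᵥ Sum.elim 0 y < 0
  rw [Mmat_mulVec_sumElim_zero_dotProduct hy]
  have hDy : 0 ≤ (D *ᵥ y) ⬝ᵥ (D *ᵥ y) := Finset.sum_nonneg fun i _ => mul_self_nonneg _
  have hyy : 0 < y ⬝ᵥ y := by simpa using dotProduct_star_self_pos_iff.mpr hy0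
  nlinarith

end QuadraticForm

theorem neg_index_ge_dim_kerB_general {k : ℕ} (A B C D : Matrix (Fin k) (Fin k) ℝ) :
    ∃ ε₀ > 0, ∀ ε : ℝ, 0 < ε → ε < ε₀ →
      Module.finrank ℝ (LinearMap.ker B.mulVecLin) ≤
        negDim (Mmat ε (Matrix.fromBlocks A B C D)) ∧
      signat (Mmat ε (Matrix.fromBlocks A B C D)) ≤
        2 * ((k : ℤ) - Module.finrank ℝ (LinearMap.ker B.mulVecLin)) := by
  refine ⟨Real.pi / 4, by positivity, fun ε hε hε' => ?_⟩
  have hsin : 0 < Real.sin (2 * ε) :=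
    Real.sin_pos_of_pos_of_lt_pi (by linarith) (by linarith)
  have hneg := finrank_ker_le_negDim_Mmat A B C D hsin
  refine ⟨hneg, ?_⟩
  have hsignat := signat_le_of_le_negDim _ hneg
  simp only [Fintype.card_sum, Fintype.card_fin] at hsignat
  push_cast at hsignat
  linarith

/-- For `0 < ε` small, `m⁻(M_ε(P)) ≥ dim ker B`, hence
`(1/2) sgn M_ε(P) ≤ k - dim ker B`. -/
theorem neg_index_ge_dim_kerB {k : ℕ} (A B C D : Matrix (Fin k) (Fin k) ℝ)
    (h : IsSymplectic (Matrix.fromBlocks A B C D)) :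
    ∃ ε₀ > 0, ∀ ε : ℝ, 0 < ε → ε < ε₀ →
      Module.finrank ℝ (LinearMap.ker B.mulVecLin) ≤
        negDim (Mmat ε (Matrix.fromBlocks A B C D)) ∧
      signat (Mmat ε (Matrix.fromBlocks A B C D)) ≤
        2 * ((k : ℤ) - Module.finrank ℝ (LinearMap.ker B.mulVecLin)) :=
  neg_index_ge_dim_kerB_general A B C D
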